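/- Let S be a countable iLWF inverse semigroup whose set of idempotents {e ∈ S : e*e = e} is finite. Then S is iLEF: for every finite subset H of S there exist a finite inverse semigroup F and an injective function f : H → F such that for all x, y ∈ H with x*y ∈ H, f(x*y) = f(x)*f(y). -/

import Mathlib

/-- An inverse semigroup: a semigroup with an inverse operation `x ↦ x⁻¹` such that
`x⁻¹` is the unique element `y` with `x * y * x = x` and `y * x * y = y`. -/
class InverseSemigroup (S : Type*) extends Semigroup S, Inv S where
  mul_inv_mul : ∀ x : S, x * x⁻¹ * x = x
  inv_mul_inv : ∀ x : S, x⁻¹ * x * x⁻¹ = x⁻¹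
  inv_unique : ∀ x y : S, x * y * x = x → y * x * y = y → y = x⁻¹

/-- An inverse semigroup `S` is iLWF if for every finite subset `H` of `S` there exist a
finite inverse semigroup `D` and a function `d : D → S` such that `H ⊆ d(D)` and
`d (x' * y') = d x' * d y'` whenever `d x', d y' ∈ H`. -/
def IsiLWF (S : Type*) [InverseSemigroup S] : Prop :=
  ∀ H : Finset S, ∃ (D : Type) (_ : InverseSemigroup D) (_ : Fintype D) (d : D → S),
    (↑H ⊆ Set.range d) ∧
      ∀ x' y' : D, d x' ∈ H → d y' ∈ H → d (x' * y') = d x' * d y'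

/-- An inverse semigroup `S` is iLEF if for every finite subset `H` of `S` there exist a
finite inverse semigroup `F` and a function `f : S → F` injective on `H` such that
`f (x * y) = f x * f y` whenever `x, y, x * y ∈ H`. -/
def IsiLEF (S : Type*) [InverseSemigroup S] : Prop :=
  ∀ H : Finset S, ∃ (F : Type) (_ : InverseSemigroup F) (_ : Fintype F) (f : S → F),
    Set.InjOn f ↑H ∧
      ∀ x ∈ H, ∀ y ∈ H, x * y ∈ H → f (x * y) = f x * f y

/-!
For an idempotent `e`, let `L` be the set of idempotents `𝒟`-related to `e` (finite, as `S` has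
finitely many idempotents) and choose `r_f` with `r_f r_f⁻¹ = e`, `r_f⁻¹ r_f = f` for `f ∈ L`.
Then `S` acts on the right by partial bijections of `Gₑ × L`, where `Gₑ` is the maximal subgroup
at `e`: `(g, f) · s = (g c(f, s), s⁻¹ f s)` whenever `f ≤ s s⁻¹`, with the cocycle
`c(f, s) = r_f s r_{s⁻¹fs}⁻¹ ∈ Gₑ`. Replacing `Gₑ` by a finite group `Q` together with a map
`Gₑ → Q` that is injective and multiplicative on the finitely many cocycle values met by `H`
gives a finite partial representation that is multiplicative on `H`, and the product of these
over all idempotents is injective on `H`.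

Such a `Q` comes from iLWF: lift the relevant part of `Gₑ` to a finite inverse semigroup `D`
and cut down by the least idempotent `κ` over `e`. The lifts then become units of the local
monoid `κDκ`, the units over `e` form a subgroup `N` normalised by all the lifts, and `Q` is the
quotient of the normaliser of `N` by `N`.
-/

universe u v

theorem exists_isIdempotentElem_of_finite {M : Type*} [Semigroup M] {s : Set M} (hs : s.Finite)
    (hne : s.Nonempty) (hmul : ∀ x ∈ s, ∀ y ∈ s, x * y ∈ s) : ∃ m ∈ s, IsIdempotentElem m := by
  let : TopologicalSpace M := ⊥
  have : DiscreteTopology M := ⟨rfl⟩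
  exact exists_idempotent_in_compact_subsemigroup (fun _ => continuous_of_discreteTopology) s hne
    hs.isCompact hmul

theorem Submonoid.isUnit_of_forall_isIdempotentElem {M : Type*} [Monoid M] [Finite M]
    (T : Submonoid M) (hT : ∀ b ∈ T, IsIdempotentElem b → b = 1) {m : M} (hm : m ∈ T) :
    IsUnit m := by
  obtain ⟨_, ⟨a, ha, rfl⟩, hidem⟩ := exists_isIdempotentElem_of_finite (Set.toFinite ((m * ·) '' T))
    ⟨m * 1, 1, T.one_mem, rfl⟩ (by
      rintro _ ⟨a, ha, rfl⟩ _ ⟨b, hb, rfl⟩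
      exact ⟨a * m * b, T.mul_mem (T.mul_mem ha hm) hb, by simp only [mul_assoc]⟩)
  exact IsUnit.of_mul_eq_one a (hT _ (T.mul_mem hm ha) hidem)

def LocalMonoid {D : Type*} [Semigroup D] (κ : D) : Type _ := {u : D // κ * u = u ∧ u * κ = u}

namespace LocalMonoid

variable {D : Type*} [Semigroup D] {κ : D}

abbrev monoid (hκ : IsIdempotentElem κ) : Monoid (LocalMonoid κ) where
  mul u v := ⟨u.1 * v.1, by rw [← mul_assoc, u.2.1], by rw [mul_assoc, v.2.2]⟩
  mul_assoc u v w := Subtype.ext (mul_assoc u.1 v.1 w.1)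
  one := ⟨κ, hκ, hκ⟩
  one_mul u := Subtype.ext u.2.1
  mul_one u := Subtype.ext u.2.2

def mk (hκ : IsIdempotentElem κ) (x : D) : LocalMonoid κ :=
  ⟨κ * x * κ, by rw [← mul_assoc, ← mul_assoc, hκ.eq], by rw [mul_assoc, hκ.eq]⟩

end LocalMonoid

protected abbrev Function.Injective.inverseSemigroup {α β : Type*} [Mul α] [Inv α]
    [InverseSemigroup β] (f : α → β) (hf : Function.Injective f)
    (mul : ∀ a b, f (a * b) = f a * f b) (inv : ∀ a, f a⁻¹ = (f a)⁻¹) : InverseSemigroup α where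
  toSemigroup := hf.semigroup f mul
  mul_inv_mul a := hf (by rw [mul, mul, inv, InverseSemigroup.mul_inv_mul])
  inv_mul_inv a := hf (by rw [mul, mul, inv, InverseSemigroup.inv_mul_inv])
  inv_unique a b h₁ h₂ := hf <| by
    rw [inv]
    exact InverseSemigroup.inv_unique _ _ (by rw [← mul, ← mul, h₁]) (by rw [← mul, ← mul, h₂])

noncomputable instance Shrink.inverseSemigroup {α : Type*} [InverseSemigroup α] [Small.{v} α] :
    InverseSemigroup (Shrink.{v} α) :=
  (equivShrink α).symm.injective.inverseSemigroup _ (equivShrink_symm_mul) (equivShrink_symm_inv)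

instance Pi.inverseSemigroup {ι : Type*} {β : ι → Type*} [∀ i, InverseSemigroup (β i)] :
    InverseSemigroup (∀ i, β i) where
  mul_inv_mul f := funext fun i => InverseSemigroup.mul_inv_mul (f i)
  inv_mul_inv f := funext fun i => InverseSemigroup.inv_mul_inv (f i)
  inv_unique f g h₁ h₂ := funext fun i =>
    InverseSemigroup.inv_unique (f i) (g i) (congrFun h₁ i) (congrFun h₂ i)

namespace PEquiv

variable {α β : Type*}

open Classical in
noncomputable def ofPartialInjective (f : α → Option β)
    (hf : ∀ a₁ a₂ b, f a₁ = some b → f a₂ = some b → a₁ = a₂) : α ≃. β where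
  toFun := f
  invFun b := if h : ∃ a, f a = some b then some h.choose else none
  inv a b := by
    constructor
    · intro h
      split_ifs at h with hb
      cases h
      exact hb.choose_spec
    · intro h
      rw [dif_pos ⟨a, h⟩, hf _ _ _ (⟨a, h⟩ : ∃ a, f a = some b).choose_spec h]

@[simp]
theorem coe_ofPartialInjective (f : α → Option β) (hf) : ⇑(ofPartialInjective f hf) = f := rfl

theorem trans_symm_trans (f : α ≃. β) : (f.trans f.symm).trans f = f := by
  ext a b
  simp only [trans_eq_some, eq_some_iff]
  constructor
  · rintro ⟨a', ⟨b', hb', ha'⟩, hb⟩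
    rwa [← f.inj hb' ha'] at hb
  · exact fun h => ⟨a, ⟨b, h, h⟩, h⟩

theorem eq_symm_of_trans_trans {f : α ≃. β} {g : β ≃. α} (h₁ : (f.trans g).trans f = f)
    (h₂ : (g.trans f).trans g = g) : g = f.symm := by
  ext b a
  rw [eq_some_iff]
  constructor
  · intro hg
    have h := DFunLike.congr_fun h₂ b
    rw [hg, trans_eq_some] at h
    obtain ⟨b', hb', ha⟩ := h
    obtain ⟨a', ha', hb''⟩ := (trans_eq_some _ _ _ _).1 hb'
    rw [hg] at ha'
    cases ha'
    rwa [g.inj ha hg] at hb''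
  · intro hf
    have h := DFunLike.congr_fun h₁ a
    rw [hf, trans_eq_some] at h
    obtain ⟨a', ha', hb⟩ := h
    obtain ⟨b', hb', ha''⟩ := (trans_eq_some _ _ _ _).1 ha'
    rw [hf] at hb'
    cases hb'
    rwa [f.inj hb hf] at ha''

instance : Mul (α ≃. α) := ⟨PEquiv.trans⟩
instance : Inv (α ≃. α) := ⟨PEquiv.symm⟩

instance : InverseSemigroup (α ≃. α) where
  mul_assoc := trans_assoc
  mul_inv_mul := trans_symm_trans
  inv_mul_inv f := trans_symm_trans f.symm
  inv_unique _ _ := eq_symm_of_trans_trans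

instance finite [Finite α] [Finite β] : Finite (α ≃. β) := DFunLike.finite _

end PEquiv

namespace InverseSemigroup

variable {S : Type u} [InverseSemigroup S]

theorem mul_inv_mul_assoc (x : S) : x * (x⁻¹ * x) = x := by
  rw [← mul_assoc, mul_inv_mul]

theorem mul_inv_mul_mul (x z : S) : x * (x⁻¹ * (x * z)) = x * z := by
  rw [← mul_assoc x⁻¹, ← mul_assoc, mul_inv_mul_assoc]

theorem inv_mul_inv_assoc (x : S) : x⁻¹ * (x * x⁻¹) = x⁻¹ := by
  rw [← mul_assoc, inv_mul_inv]

theorem inv_mul_inv_mul (x z : S) : x⁻¹ * (x * (x⁻¹ * z)) = x⁻¹ * z := by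
  rw [← mul_assoc x, ← mul_assoc, inv_mul_inv_assoc]

theorem mul_eq_of_inv_mul_eq {x e : S} (h : x⁻¹ * x = e) : x * e = x := by
  subst h; exact mul_inv_mul_assoc x

theorem inv_inv (x : S) : x⁻¹⁻¹ = x :=
  (inv_unique _ _ (inv_mul_inv x) (mul_inv_mul x)).symm

theorem isIdempotentElem_mul_inv (x : S) : IsIdempotentElem (x * x⁻¹) := by
  rw [IsIdempotentElem, ← mul_assoc, mul_inv_mul]

theorem isIdempotentElem_inv_mul (x : S) : IsIdempotentElem (x⁻¹ * x) := by
  simpa only [inv_inv] using isIdempotentElem_mul_inv x⁻¹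

theorem _root_.IsIdempotentElem.inv_eq_self {e : S} (he : IsIdempotentElem e) : e⁻¹ = e :=
  (inv_unique e e (by rw [he.eq, he.eq]) (by rw [he.eq, he.eq])).symm

theorem isIdempotentElem_mul {e f : S} (he : IsIdempotentElem e) (hf : IsIdempotentElem f) :
    IsIdempotentElem (e * f) := by
  -- `f (ef)⁻¹ e` is an inverse of `ef`, hence equal to `(ef)⁻¹`, which makes `(ef)⁻¹` idempotent
  have hy : f * (e * f)⁻¹ * e = (e * f)⁻¹ := by
    refine inv_unique _ _ ?_ ?_
    · calc e * f * (f * (e * f)⁻¹ * e) * (e * f) = e * f * (e * f)⁻¹ * (e * f) := by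
            simp only [mul_assoc, he.mul_self_mul, hf.mul_self_mul]
        _ = e * f := mul_inv_mul _
    · calc f * (e * f)⁻¹ * e * (e * f) * (f * (e * f)⁻¹ * e)
            = f * ((e * f)⁻¹ * (e * f) * (e * f)⁻¹) * e := by
            simp only [mul_assoc, he.mul_self_mul, hf.mul_self_mul]
        _ = f * (e * f)⁻¹ * e := by rw [inv_mul_inv, mul_assoc]
  have hyy : IsIdempotentElem (e * f)⁻¹ := by
    calc (e * f)⁻¹ * (e * f)⁻¹ = (f * (e * f)⁻¹ * e) * (f * (e * f)⁻¹ * e) := by rw [hy]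
      _ = f * ((e * f)⁻¹ * (e * f) * (e * f)⁻¹) * e := by simp only [mul_assoc]
      _ = (e * f)⁻¹ := by rw [inv_mul_inv, hy]
  rw [← inv_inv (e * f), hyy.inv_eq_self]
  exact hyy

theorem commute_of_isIdempotentElem {e f : S} (he : IsIdempotentElem e)
    (hf : IsIdempotentElem f) : Commute e f := by
  have hef := isIdempotentElem_mul he hf
  have hfe := isIdempotentElem_mul hf he
  have h := inv_unique (e * f) (f * e)
    (by simpa only [mul_assoc, he.mul_self_mul, hf.mul_self_mul] using hef.eq)
    (by simpa only [mul_assoc, he.mul_self_mul, hf.mul_self_mul] using hfe.eq)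
  rw [hef.inv_eq_self] at h
  exact h.symm

theorem mul_inv_rev (x y : S) : (x * y)⁻¹ = y⁻¹ * x⁻¹ := by
  have hc := commute_of_isIdempotentElem (isIdempotentElem_mul_inv y) (isIdempotentElem_inv_mul x)
  refine (inv_unique _ _ ?_ ?_).symm
  · calc x * y * (y⁻¹ * x⁻¹) * (x * y) = x * ((y * y⁻¹) * (x⁻¹ * x)) * y := by
          simp only [mul_assoc]
      _ = x * y := by rw [hc.eq]; simp only [mul_assoc, mul_inv_mul_mul, mul_inv_mul_assoc]
  · calc y⁻¹ * x⁻¹ * (x * y) * (y⁻¹ * x⁻¹) = y⁻¹ * ((x⁻¹ * x) * (y * y⁻¹)) * x⁻¹ := by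
          simp only [mul_assoc]
      _ = y⁻¹ * x⁻¹ := by
          rw [← hc.eq]; simp only [mul_assoc, inv_mul_inv_mul, inv_mul_inv_assoc]

theorem conj_mul (f x y : S) : (x * y)⁻¹ * f * (x * y) = y⁻¹ * (x⁻¹ * f * x) * y := by
  rw [mul_inv_rev]; simp only [mul_assoc]

theorem mul_conj_eq {f : S} (hf : IsIdempotentElem f) (s : S) : s * (s⁻¹ * f * s) = f * s := by
  calc s * (s⁻¹ * f * s) = s * s⁻¹ * f * s := by simp only [mul_assoc]
    _ = f * s := by
      rw [(commute_of_isIdempotentElem (isIdempotentElem_mul_inv s) hf).eq, mul_assoc f,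
        mul_assoc, mul_inv_mul_assoc]

theorem mul_conj_mul_inv {f s : S} (hf : IsIdempotentElem f) (hle : f * (s * s⁻¹) = f) :
    s * (s⁻¹ * f * s) * s⁻¹ = f := by
  rw [mul_conj_eq hf, mul_assoc, hle]

theorem le_mul_mul_inv_iff {f : S} (hf : IsIdempotentElem f) (x y : S) :
    f * (x * y * (x * y)⁻¹) = f ↔
      f * (x * x⁻¹) = f ∧ x⁻¹ * f * x * (y * y⁻¹) = x⁻¹ * f * x := by
  have hxy : x * y * (x * y)⁻¹ = x * (y * y⁻¹) * x⁻¹ := by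
    rw [mul_inv_rev]; simp only [mul_assoc]
  rw [hxy]
  constructor
  · intro h
    constructor
    · calc f * (x * x⁻¹) = f * (x * (y * y⁻¹) * x⁻¹) * (x * x⁻¹) := by rw [h]
        _ = f := by simp only [mul_assoc, inv_mul_inv_assoc]; simpa only [mul_assoc] using h
    · have hc := commute_of_isIdempotentElem (isIdempotentElem_mul_inv y)
        (isIdempotentElem_inv_mul x)
      calc x⁻¹ * f * x * (y * y⁻¹) = x⁻¹ * (f * (x * (y * y⁻¹) * x⁻¹)) * x * (y * y⁻¹) := by
            rw [h]
        _ = x⁻¹ * f * x * (y * y⁻¹) * ((x⁻¹ * x) * (y * y⁻¹)) := by simp only [mul_assoc]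
        _ = x⁻¹ * f * x * (y * y⁻¹) * (x⁻¹ * x) := by
            rw [← hc.eq, ← mul_assoc, (isIdempotentElem_mul_inv y).mul_mul_self]
        _ = x⁻¹ * (f * (x * (y * y⁻¹) * x⁻¹)) * x := by simp only [mul_assoc]
        _ = x⁻¹ * f * x := by rw [h]
  · rintro ⟨hx, hy⟩
    calc f * (x * (y * y⁻¹) * x⁻¹) = x * (x⁻¹ * f * x * (y * y⁻¹)) * x⁻¹ := by
          simp only [← mul_assoc, ← mul_conj_eq hf x]
      _ = f := by rw [hy, mul_conj_mul_inv hf hx]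

def DRel (e f : S) : Prop := ∃ s : S, s * s⁻¹ = e ∧ s⁻¹ * s = f

theorem DRel.isIdempotentElem {e f : S} (h : DRel e f) : IsIdempotentElem f := by
  obtain ⟨s, -, rfl⟩ := h
  exact isIdempotentElem_inv_mul s

theorem mul_inv_of_le {e f r s : S} (hr : r * r⁻¹ = e) (hr' : r⁻¹ * r = f)
    (hle : f * (s * s⁻¹) = f) : r * s * (r * s)⁻¹ = e ∧ (r * s)⁻¹ * (r * s) = s⁻¹ * f * s := by
  rw [mul_inv_rev]
  constructor
  · calc r * s * (s⁻¹ * r⁻¹) = r * (r⁻¹ * r * (s * s⁻¹)) * r⁻¹ := by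
          simp only [mul_assoc, mul_inv_mul_mul]
      _ = e := by rw [hr', hle, ← hr', ← mul_assoc, mul_inv_mul, hr]
  · rw [← hr']; simp only [mul_assoc]

theorem DRel.conj {e f s : S} (h : DRel e f) (hle : f * (s * s⁻¹) = f) :
    DRel e (s⁻¹ * f * s) := by
  obtain ⟨r, hr, hr'⟩ := h
  exact ⟨r * s, mul_inv_of_le hr hr' hle⟩

theorem hClass_mul_inv {e a b : S} (ha : a * a⁻¹ = e) (hb : b * b⁻¹ = e)
    (hab : a⁻¹ * a = b⁻¹ * b) :
    a * b⁻¹ * (a * b⁻¹)⁻¹ = e ∧ (a * b⁻¹)⁻¹ * (a * b⁻¹) = e ∧ a * b⁻¹ * b = a := by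
  rw [mul_inv_rev, inv_inv]
  refine ⟨?_, ?_, ?_⟩
  · calc a * b⁻¹ * (b * a⁻¹) = a * (b⁻¹ * b) * a⁻¹ := by simp only [mul_assoc]
      _ = e := by rw [← hab, mul_inv_mul_assoc, ha]
  · calc b * a⁻¹ * (a * b⁻¹) = b * (a⁻¹ * a) * b⁻¹ := by simp only [mul_assoc]
      _ = e := by rw [hab, mul_inv_mul_assoc, hb]
  · rw [mul_assoc, ← hab, ← mul_assoc, mul_inv_mul]

open Classical in
noncomputable def dRep (e f : S) : S := if h : DRel e f then h.choose else e

theorem dRep_spec {e f : S} (h : DRel e f) :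
    dRep e f * (dRep e f)⁻¹ = e ∧ (dRep e f)⁻¹ * dRep e f = f := by
  rw [dRep, dif_pos h]
  exact h.choose_spec

noncomputable def cocycle (e f s : S) : S := dRep e f * s * (dRep e (s⁻¹ * f * s))⁻¹

theorem cocycle_spec {e f s : S} (h : DRel e f) (hle : f * (s * s⁻¹) = f) :
    cocycle e f s * (cocycle e f s)⁻¹ = e ∧ (cocycle e f s)⁻¹ * cocycle e f s = e ∧
      cocycle e f s * dRep e (s⁻¹ * f * s) = dRep e f * s := by
  have hr := dRep_spec h
  have hrs := mul_inv_of_le hr.1 hr.2 hle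
  have hr' := dRep_spec (h.conj hle)
  exact hClass_mul_inv hrs.1 hr'.1 (hrs.2.trans hr'.2.symm)

theorem cocycle_mul {e f x y : S} (h : DRel e f) (hle : f * (x * y * (x * y)⁻¹) = f) :
    cocycle e f (x * y) = cocycle e f x * cocycle e (x⁻¹ * f * x) y := by
  obtain ⟨hx, hy⟩ := (le_mul_mul_inv_iff h.isIdempotentElem x y).1 hle
  have hxy := cocycle_spec h hle
  have hx' := cocycle_spec h hx
  have hy' := cocycle_spec (h.conj hx) hy
  rw [conj_mul] at hxy
  have hr := dRep_spec ((h.conj hx).conj hy)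
  have hcancel : ∀ c : S, c * e = c → c * dRep e (y⁻¹ * (x⁻¹ * f * x) * y) *
      (dRep e (y⁻¹ * (x⁻¹ * f * x) * y))⁻¹ = c := fun c hc => by
    rw [mul_assoc, hr.1, hc]
  have hye : cocycle e (x⁻¹ * f * x) y * e = cocycle e (x⁻¹ * f * x) y :=
    mul_eq_of_inv_mul_eq hy'.2.1
  calc cocycle e f (x * y)
      = cocycle e f (x * y) * dRep e (y⁻¹ * (x⁻¹ * f * x) * y) *
          (dRep e (y⁻¹ * (x⁻¹ * f * x) * y))⁻¹ := by
        rw [hcancel _ (mul_eq_of_inv_mul_eq hxy.2.1)]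
    _ = cocycle e f x * (cocycle e (x⁻¹ * f * x) y * dRep e (y⁻¹ * (x⁻¹ * f * x) * y)) *
          (dRep e (y⁻¹ * (x⁻¹ * f * x) * y))⁻¹ := by
        rw [hxy.2.2, hy'.2.2, ← mul_assoc (cocycle e f x), hx'.2.2, mul_assoc (dRep e f) x]
    _ = cocycle e f x * cocycle e (x⁻¹ * f * x) y := by
        rw [← mul_assoc, hcancel _ (by rw [mul_assoc, hye])]

theorem exists_least_isIdempotentElem {s : Set S} (hs : s.Finite) (hne : s.Nonempty)
    (hmul : ∀ x ∈ s, ∀ y ∈ s, x * y ∈ s) :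
    ∃ κ ∈ s, IsIdempotentElem κ ∧ ∀ μ ∈ s, IsIdempotentElem μ → κ * μ = κ := by
  obtain ⟨κ, ⟨hκs, hκ⟩, hmin⟩ := Set.Finite.exists_minimalFor (fun μ => {x : S | x * μ = x})
    {μ ∈ s | IsIdempotentElem μ} (hs.subset fun _ h => h.1)
    (exists_isIdempotentElem_of_finite hs hne hmul)
  refine ⟨κ, hκs, hκ, fun μ hμs hμ => ?_⟩
  have hcomm := commute_of_isIdempotentElem hκ hμ
  have hsub : {x : S | x * (κ * μ) = x} ⊆ {x : S | x * κ = x} := fun x (hx : x * (κ * μ) = x) =>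
    calc x * κ = x * (κ * μ) * κ := by rw [hx]
      _ = x := by rw [mul_assoc, mul_assoc, ← hcomm.eq, hκ.mul_self_mul, hx]
  have hκμ : κ * (κ * μ) = κ := hmin ⟨hmul _ hκs _ hμs, isIdempotentElem_mul hκ hμ⟩ hsub hκ.eq
  rwa [← mul_assoc, hκ.eq] at hκμ

structure IsSymmetricAt (e : S) (K : Set S) : Prop where
  self_mem : e ∈ K
  inv_mem : ∀ c ∈ K, c⁻¹ ∈ K
  mul_inv : ∀ c ∈ K, c * c⁻¹ = e

namespace IsSymmetricAt

variable {e c : S} {K : Set S}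

theorem inv_mul (hK : IsSymmetricAt e K) (hc : c ∈ K) : c⁻¹ * c = e := by
  simpa only [inv_inv] using hK.mul_inv _ (hK.inv_mem c hc)

theorem mul_id (hK : IsSymmetricAt e K) (hc : c ∈ K) : c * e = c :=
  mul_eq_of_inv_mul_eq (hK.inv_mul hc)

theorem id_mul (hK : IsSymmetricAt e K) (hc : c ∈ K) : e * c = c := by
  rw [← hK.mul_inv c hc, mul_inv_mul]

theorem isIdempotentElem (hK : IsSymmetricAt e K) : IsIdempotentElem e :=
  hK.id_mul hK.self_mem

theorem eq_of_inv_mul_eq (hK : IsSymmetricAt e K) {a b : S} (ha : a ∈ K) (hb : b ∈ K)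
    (h : a⁻¹ * b = e) : a = b := by
  rw [← hK.mul_id ha, ← h, ← mul_assoc, hK.mul_inv a ha, hK.id_mul hb]

end IsSymmetricAt

structure IsPartialHomCover {G : Type*} [Group G] (δ : G → S) (e : S) (K : Set S) : Prop where
  symmetric : IsSymmetricAt e K
  map_one : δ 1 = e
  map_mul : ∀ g h, δ g ∈ K → δ h ∈ K → δ (g * h) = δ g * δ h
  surjOn : ∀ c ∈ K, ∃ g, δ g = c

namespace IsPartialHomCover

variable {G : Type v} [Group G] {δ : G → S} {e : S} {K : Set S}

theorem map_pow (hδ : IsPartialHomCover δ e K) {g : G} (hg : δ g = e) (n : ℕ) : δ (g ^ n) = e := by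
  induction n with
  | zero => rw [pow_zero, hδ.map_one]
  | succ n ih =>
    rw [pow_succ, hδ.map_mul _ _ (ih ▸ hδ.symmetric.self_mem) (hg ▸ hδ.symmetric.self_mem), ih, hg,
      hδ.symmetric.isIdempotentElem.eq]

variable [Finite G]

def ker (hδ : IsPartialHomCover δ e K) : Subgroup G where
  carrier := {g | δ g = e}
  one_mem' := hδ.map_one
  mul_mem' := fun {g h} (hg : δ g = e) (hh : δ h = e) => show δ (g * h) = e by
    rw [hδ.map_mul _ _ (hg ▸ hδ.symmetric.self_mem) (hh ▸ hδ.symmetric.self_mem), hg, hh,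
      hδ.symmetric.isIdempotentElem.eq]
  inv_mem' := fun {g} (hg : δ g = e) => by
    obtain ⟨n, hn⟩ : g⁻¹ ∈ Submonoid.powers g :=
      mem_powers_iff_mem_zpowers.2 (inv_mem (Subgroup.mem_zpowers g))
    exact hn ▸ hδ.map_pow hg n

theorem mem_ker (hδ : IsPartialHomCover δ e K) {g : G} : g ∈ hδ.ker ↔ δ g = e := Iff.rfl

theorem map_inv (hδ : IsPartialHomCover δ e K) {g : G} (hg : δ g ∈ K) : δ g⁻¹ = (δ g)⁻¹ := by
  have hK := hδ.symmetric
  obtain ⟨h, hh⟩ := hδ.surjOn _ (hK.inv_mem _ hg)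
  have hgh : δ (g * h)⁻¹ = e := hδ.ker.inv_mem <| show δ (g * h) = e by
    rw [hδ.map_mul _ _ hg (hh ▸ hK.inv_mem _ hg), hh, hK.mul_inv _ hg]
  calc δ g⁻¹ = δ (h * (g * h)⁻¹) := by group
    _ = (δ g)⁻¹ := by
      rw [hδ.map_mul _ _ (hh ▸ hK.inv_mem _ hg) (hgh ▸ hK.self_mem), hh, hgh,
        hK.mul_id (hK.inv_mem _ hg)]

theorem map_inv_mul (hδ : IsPartialHomCover δ e K) {g h : G} (hg : δ g ∈ K) (hh : δ h ∈ K) :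
    δ (g⁻¹ * h) = (δ g)⁻¹ * δ h := by
  rw [hδ.map_mul _ _ (hδ.map_inv hg ▸ hδ.symmetric.inv_mem _ hg) hh, hδ.map_inv hg]

theorem mem_normalizer_ker (hδ : IsPartialHomCover δ e K) {g : G} (hg : δ g ∈ K) :
    g ∈ Subgroup.normalizer (hδ.ker : Set G) := by
  have hK := hδ.symmetric
  refine Subgroup.mem_normalizer_fintype fun n (hn : δ n = e) => show δ (g * n * g⁻¹) = e from ?_
  have hgn : δ (g * n) = δ g := by rw [hδ.map_mul _ _ hg (hn ▸ hK.self_mem), hn, hK.mul_id hg]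
  rw [hδ.map_mul _ _ (hgn ▸ hg) (hδ.map_inv hg ▸ hK.inv_mem _ hg), hgn, hδ.map_inv hg,
    hK.mul_inv _ hg]

theorem exists_finite_group_approx (hδ : IsPartialHomCover δ e K) :
    ∃ (Q : Type v) (_ : Group Q) (_ : Finite Q) (ψ : S → Q), Set.InjOn ψ K ∧
      ∀ u ∈ K, ∀ v ∈ K, u * v ∈ K → ψ (u * v) = ψ u * ψ v := by
  classical
  have hK := hδ.symmetric
  set P := Subgroup.normalizer (hδ.ker : Set G)
  have hmk : ∀ g h : P, δ g ∈ K → δ h ∈ K →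
      ((g : P ⧸ hδ.ker.subgroupOf P) = h ↔ (δ g)⁻¹ * δ h = e) := fun g h hg hh => by
    rw [QuotientGroup.eq, Subgroup.mem_subgroupOf, Subgroup.coe_mul, Subgroup.coe_inv, hδ.mem_ker,
      hδ.map_inv_mul hg hh]
  choose lift hlift using hδ.surjOn
  let lift' : ∀ c ∈ K, P := fun c hc =>
    ⟨lift c hc, hδ.mem_normalizer_ker ((hlift c hc).symm ▸ hc)⟩
  let ψ : S → P ⧸ hδ.ker.subgroupOf P := fun c => if hc : c ∈ K then lift' c hc else 1
  have hψ : ∀ c (hc : c ∈ K), ψ c = lift' c hc := fun c hc => dif_pos hc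
  have hlift' : ∀ c (hc : c ∈ K), δ (lift' c hc) = c := hlift
  refine ⟨_, inferInstance, inferInstance, ψ, fun a ha b hb hab => ?_, fun u hu v hv huv => ?_⟩
  · rw [hψ a ha, hψ b hb, hmk _ _ ((hlift' a ha).symm ▸ ha) ((hlift' b hb).symm ▸ hb), hlift',
      hlift'] at hab
    exact hK.eq_of_inv_mul_eq ha hb hab
  · have hprod : δ (lift' u hu * lift' v hv : P) = u * v := by
      rw [Subgroup.coe_mul, hδ.map_mul _ _ ((hlift' u hu).symm ▸ hu) ((hlift' v hv).symm ▸ hv),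
        hlift', hlift']
    rw [hψ _ huv, hψ u hu, hψ v hv, ← QuotientGroup.mk_mul,
      hmk _ _ ((hlift' _ huv).symm ▸ huv) (hprod ▸ huv), hprod, hlift']
    exact hK.inv_mul huv

end IsPartialHomCover

theorem _root_.IsiLWF.exists_isPartialHomCover (hS : IsiLWF S) {e : S} {K : Finset S}
    (hK : IsSymmetricAt e K) :
    ∃ (G : Type) (_ : Group G) (_ : Finite G) (δ : G → S), IsPartialHomCover δ e K := by
  obtain ⟨D, _, _, d, hcover, hd⟩ := hS K
  have hFmul : ∀ x ∈ {u | d u = e}, ∀ y ∈ {u | d u = e}, x * y ∈ {u | d u = e} :=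
    fun x (hx : d x = e) y (hy : d y = e) => show d (x * y) = e by
      rw [hd x y (hx ▸ hK.self_mem) (hy ▸ hK.self_mem), hx, hy, hK.isIdempotentElem.eq]
  obtain ⟨κ, hκe, hκ, hκmin⟩ :=
    exists_least_isIdempotentElem (Set.toFinite _) (hcover hK.self_mem) hFmul
  let := LocalMonoid.monoid hκ
  have : Finite (LocalMonoid κ) := Subtype.finite
  let T : Submonoid (LocalMonoid κ) :=
    { carrier := {u | d u.1 = e}
      mul_mem' := fun hu hv => hFmul _ hu _ hv
      one_mem' := hκe }
  -- in `κDκ` the only idempotent over `e` is `κ`, by minimality of `κ`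
  have hunit : ∀ u : LocalMonoid κ, d u.1 = e → IsUnit u := fun u hu =>
    T.isUnit_of_forall_isIdempotentElem (fun b hb hidem => Subtype.ext <|
      b.2.1.symm.trans (hκmin _ hb (congrArg Subtype.val hidem))) hu
  have hlift : ∀ c ∈ K, ∃ u : LocalMonoid κ, d u.1 = c := fun c hc => by
    obtain ⟨t, rfl⟩ := hcover hc
    have hκt : d (κ * t) = d t := by rw [hd _ _ (hκe ▸ hK.self_mem) hc, hκe, hK.id_mul hc]
    exact ⟨LocalMonoid.mk hκ t, by
      rw [LocalMonoid.mk, hd _ _ (hκt ▸ hc) (hκe ▸ hK.self_mem), hκt, hκe, hK.mul_id hc]⟩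
  refine ⟨(LocalMonoid κ)ˣ, inferInstance, inferInstance, fun g => d g.1.1,
    ⟨hK, hκe, fun g h hg hh => hd _ _ hg hh, fun c hc => ?_⟩⟩
  obtain ⟨u, hu⟩ := hlift c hc
  obtain ⟨v, hv⟩ := hlift c⁻¹ (hK.inv_mem c hc)
  have huv : IsUnit (u * v) := hunit _ <| show d (u.1 * v.1) = e by
    rw [hd _ _ (hu ▸ hc) (hv ▸ hK.inv_mem c hc), hu, hv, hK.mul_inv c hc]
  exact ⟨(isUnit_of_mul_isUnit_left huv).unit, hu⟩

theorem _root_.IsiLWF.exists_finite_group_approx (hS : IsiLWF S) {e : S} (he : IsIdempotentElem e)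
    (W : Finset S) (hW : ∀ w ∈ W, w * w⁻¹ = e ∧ w⁻¹ * w = e) :
    ∃ (Q : Type) (_ : Group Q) (_ : Finite Q) (ψ : S → Q), Set.InjOn ψ W ∧
      ∀ u ∈ W, ∀ v ∈ W, u * v ∈ W → ψ (u * v) = ψ u * ψ v := by
  classical
  set K := insert e (W ∪ W.image (·⁻¹))
  have hWK : ∀ w ∈ W, w ∈ K := fun w hw => by simp [K, hw]
  have hK : IsSymmetricAt e K := by
    refine ⟨Finset.mem_insert_self e _, fun c hc => ?_, fun c hc => ?_⟩
    · simp only [K, Finset.mem_coe, Finset.mem_insert, Finset.mem_union, Finset.mem_image] at hc ⊢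
      rcases hc with rfl | hc | ⟨w, hw, rfl⟩
      · exact Or.inl he.inv_eq_self
      · exact Or.inr (Or.inr ⟨c, hc, rfl⟩)
      · exact Or.inr (Or.inl (by rwa [inv_inv]))
    · simp only [K, Finset.mem_coe, Finset.mem_insert, Finset.mem_union, Finset.mem_image] at hc
      rcases hc with rfl | hc | ⟨w, hw, rfl⟩
      · rw [he.inv_eq_self, he.eq]
      · exact (hW c hc).1
      · rw [inv_inv]; exact (hW w hw).2
  obtain ⟨G, _, _, δ, hδ⟩ := hS.exists_isPartialHomCover hK
  obtain ⟨Q, _, _, ψ, hinj, hψ⟩ := hδ.exists_finite_group_approx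
  exact ⟨Q, inferInstance, inferInstance, ψ, hinj.mono fun w hw => hWK w hw,
    fun u hu v hv huv => hψ u (hWK u hu) v (hWK v hv) (hWK _ huv)⟩

variable {Q : Type*} [Group Q]

open Classical in
noncomputable def dClassAct (e : S) (ψ : S → Q) (s : S) (p : Q × {f : S // DRel e f}) :
    Option (Q × {f : S // DRel e f}) :=
  if h : p.2.1 * (s * s⁻¹) = p.2.1 then
    some (p.1 * ψ (cocycle e p.2.1 s), ⟨s⁻¹ * p.2.1 * s, p.2.2.conj h⟩)
  else none

theorem dClassAct_injective (e : S) (ψ : S → Q) (s : S) :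
    ∀ p₁ p₂ b, dClassAct e ψ s p₁ = some b → dClassAct e ψ s p₂ = some b → p₁ = p₂ := by
  rintro ⟨q₁, f₁⟩ ⟨q₂, f₂⟩ b h₁ h₂
  simp only [dClassAct] at h₁ h₂
  split_ifs at h₁ h₂ with hf₁ hf₂
  rw [← h₂, Option.some_inj, Prod.mk.injEq, Subtype.mk.injEq] at h₁
  have hf : f₁ = f₂ := Subtype.ext <| by
    rw [← mul_conj_mul_inv f₁.2.isIdempotentElem hf₁, h₁.2,
      mul_conj_mul_inv f₂.2.isIdempotentElem hf₂]
  subst hf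
  rw [mul_right_cancel h₁.1]

noncomputable def dClassRep (e : S) (ψ : S → Q) (s : S) :
    (Q × {f : S // DRel e f}) ≃. (Q × {f : S // DRel e f}) :=
  PEquiv.ofPartialInjective (dClassAct e ψ s) (dClassAct_injective e ψ s)

theorem dClassRep_mul {e : S} {ψ : S → Q} {x y : S}
    (hψ : ∀ f, DRel e f → f * (x * y * (x * y)⁻¹) = f →
      ψ (cocycle e f (x * y)) = ψ (cocycle e f x) * ψ (cocycle e (x⁻¹ * f * x) y)) :
    dClassRep e ψ (x * y) = dClassRep e ψ x * dClassRep e ψ y := by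
  ext1 ⟨q, f⟩
  show dClassAct e ψ (x * y) (q, f) = (dClassAct e ψ x (q, f)).bind (dClassAct e ψ y)
  have hiff := le_mul_mul_inv_iff f.2.isIdempotentElem x y
  by_cases hx : f.1 * (x * x⁻¹) = f.1
  · by_cases hy : x⁻¹ * f.1 * x * (y * y⁻¹) = x⁻¹ * f.1 * x
    · have hxy := hiff.2 ⟨hx, hy⟩
      simp only [dClassAct, dif_pos hx, dif_pos hxy, Option.bind_some]
      rw [dif_pos hy, hψ f f.2 hxy, Option.some_inj, Prod.mk.injEq, Subtype.mk.injEq]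
      exact ⟨(mul_assoc _ _ _).symm, conj_mul _ _ _⟩
    · simp only [dClassAct, dif_pos hx, dif_neg hy, dif_neg (fun h => hy (hiff.1 h).2),
        Option.bind_some]
  · simp only [dClassAct, dif_neg hx, dif_neg (fun h => hx (hiff.1 h).1), Option.bind_none]

theorem dClassRep_eq_imp {ψ : S → Q} {x y : S}
    (hψ : x * x⁻¹ * (y * y⁻¹) = x * x⁻¹ →
      ψ (cocycle (x⁻¹ * x) (x * x⁻¹) x) = ψ (cocycle (x⁻¹ * x) (x * x⁻¹) y) →
        cocycle (x⁻¹ * x) (x * x⁻¹) x = cocycle (x⁻¹ * x) (x * x⁻¹) y)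
    (h : dClassRep (x⁻¹ * x) ψ x = dClassRep (x⁻¹ * x) ψ y) :
    x * x⁻¹ * (y * y⁻¹) = x * x⁻¹ ∧ x * x⁻¹ * y = x := by
  have hD : DRel (x⁻¹ * x) (x * x⁻¹) := ⟨x⁻¹, by rw [inv_inv], by rw [inv_inv]⟩
  have hx : x * x⁻¹ * (x * x⁻¹) = x * x⁻¹ := (isIdempotentElem_mul_inv x).eq
  have hxy := DFunLike.congr_fun h (1, ⟨x * x⁻¹, hD⟩)
  simp only [dClassRep, PEquiv.coe_ofPartialInjective, dClassAct, dif_pos hx] at hxy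
  by_cases hy : x * x⁻¹ * (y * y⁻¹) = x * x⁻¹
  · rw [dif_pos hy, Option.some_inj, Prod.mk.injEq, Subtype.mk.injEq, one_mul, one_mul] at hxy
    refine ⟨hy, ?_⟩
    have hrep : dRep (x⁻¹ * x) (x * x⁻¹) * x = dRep (x⁻¹ * x) (x * x⁻¹) * y := by
      rw [← (cocycle_spec hD hx).2.2, ← (cocycle_spec hD hy).2.2, hψ hy hxy.1, hxy.2]
    calc x * x⁻¹ * y = (dRep (x⁻¹ * x) (x * x⁻¹))⁻¹ * (dRep (x⁻¹ * x) (x * x⁻¹) * y) := by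
          rw [← mul_assoc, (dRep_spec hD).2]
      _ = x := by rw [← hrep, ← mul_assoc, (dRep_spec hD).2, mul_inv_mul]
  · rw [dif_neg hy] at hxy
    exact absurd hxy (Option.some_ne_none _)

theorem eq_of_mul_inv_le {x y : S} (hxy : x * x⁻¹ * (y * y⁻¹) = x * x⁻¹)
    (hyx : y * y⁻¹ * (x * x⁻¹) = y * y⁻¹) (hx : x * x⁻¹ * y = x) : x = y := by
  have h : x * x⁻¹ = y * y⁻¹ := by
    rw [← hxy, (commute_of_isIdempotentElem (isIdempotentElem_mul_inv x)
      (isIdempotentElem_mul_inv y)).eq, hyx]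
  rw [← hx, h, mul_inv_mul]

theorem _root_.IsiLWF.exists_dClassRep (hS : IsiLWF S) (H : Finset S) {e : S}
    (he : IsIdempotentElem e) (hcol : {f : S | DRel e f}.Finite) :
    ∃ (X : Type u) (_ : Finite X) (ρ : S → X ≃. X),
      (∀ x ∈ H, ∀ y ∈ H, x * y ∈ H → ρ (x * y) = ρ x * ρ y) ∧
      ∀ x ∈ H, ∀ y ∈ H, x⁻¹ * x = e → ρ x = ρ y →
        x * x⁻¹ * (y * y⁻¹) = x * x⁻¹ ∧ x * x⁻¹ * y = x := by
  classical
  set W := ((hcol.toFinset ×ˢ H).filter fun p => p.1 * (p.2 * p.2⁻¹) = p.1).image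
    fun p => cocycle e p.1 p.2
  have hmemW : ∀ f z, DRel e f → z ∈ H → f * (z * z⁻¹) = f → cocycle e f z ∈ W :=
    fun f z hf hz hle => Finset.mem_image.2 ⟨(f, z), by simp [hf, hz, hle], rfl⟩
  have hW : ∀ w ∈ W, w * w⁻¹ = e ∧ w⁻¹ * w = e := by
    simp only [W, Finset.mem_image, Finset.mem_filter, Finset.mem_product, Set.Finite.mem_toFinset]
    rintro _ ⟨⟨f, z⟩, ⟨⟨hf, -⟩, hle⟩, rfl⟩
    exact ⟨(cocycle_spec hf hle).1, (cocycle_spec hf hle).2.1⟩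
  obtain ⟨Q, _, _, ψ, hinj, hψ⟩ := hS.exists_finite_group_approx he W hW
  have : Finite {f // DRel e f} := hcol.to_subtype
  refine ⟨Q × {f // DRel e f}, inferInstance, dClassRep e ψ, fun x hx y hy hxy => ?_,
    fun x hx y hy hxe h => ?_⟩
  · refine dClassRep_mul fun f hf hle => ?_
    obtain ⟨hlx, hly⟩ := (le_mul_mul_inv_iff hf.isIdempotentElem x y).1 hle
    have hmem := hmemW f _ hf hxy hle
    rw [cocycle_mul hf hle] at hmem ⊢
    exact hψ _ (hmemW f x hf hx hlx) _ (hmemW _ y (hf.conj hlx) hy hly) hmem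
  · subst hxe
    have hD : DRel (x⁻¹ * x) (x * x⁻¹) := ⟨x⁻¹, by rw [inv_inv], by rw [inv_inv]⟩
    exact dClassRep_eq_imp (fun hle hc => hinj (hmemW _ x hD hx (isIdempotentElem_mul_inv x).eq)
      (hmemW _ y hD hy hle) hc) h

end InverseSemigroup



theorem isiLEF_of_isiLWF_of_finite_idempotents_general (S : Type*) [InverseSemigroup S]
    (hidem : {e : S | e * e = e}.Finite) (hS : IsiLWF S) : IsiLEF S := by
  intro H
  have hcol (e : S) : {f : S | InverseSemigroup.DRel e f}.Finite :=
    hidem.subset fun _ hf => hf.isIdempotentElem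
  choose X _ ρ hmul hsep using fun e : {e : S // IsIdempotentElem e} =>
    hS.exists_dClassRep H e.2 (hcol e)
  have : Finite {e : S // IsIdempotentElem e} := hidem.to_subtype
  let φ := equivShrink.{0} (∀ e, X e ≃. X e)
  refine ⟨Shrink (∀ e, X e ≃. X e), inferInstance, Fintype.ofFinite _, fun s => φ fun e => ρ e s,
    fun x hx y hy hxy => ?_, fun x hx y hy hxy => ?_⟩
  · have h := φ.injective hxy
    have hsepx := hsep ⟨_, InverseSemigroup.isIdempotentElem_inv_mul x⟩ x hx y hy rfl
      (congrFun h _)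
    have hsepy := hsep ⟨_, InverseSemigroup.isIdempotentElem_inv_mul y⟩ y hy x hx rfl
      (congrFun h _).symm
    exact InverseSemigroup.eq_of_mul_inv_le hsepx.1 hsepy.1 hsepx.2
  · rw [← equivShrink_mul]
    exact congrArg φ (funext fun e => hmul e x hx y hy hxy)

/-- A countable iLWF inverse semigroup with finitely many idempotents is iLEF. -/
theorem isiLEF_of_isiLWF_of_finite_idempotents (S : Type*) [InverseSemigroup S]
    [Countable S] (hidem : {e : S | e * e = e}.Finite) (hS : IsiLWF S) : IsiLEF S :=
  isiLEF_of_isiLWF_of_finite_idempotents_general S hidem hS
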